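/- Let n ≥ 2 and define φ_n : (0,1) × (−1,1)^{n−1} → ℝⁿ, φ_n(t, u₁,…,u_{n−1}) = (x₁,…,x_n), by x₁ = 2^{1−n} t ∏_{i=1}^{n−1}(1+u_i), x_k = t·((1−u_{k−1})/2)·∏_{i=k}^{n−1}((1+u_i)/2) for 2 ≤ k ≤ n−1, and x_n = t(1−u_{n−1})/2. Then φ_n is a bijection from (0,1) × (−1,1)^{n−1} onto the simplex D_n, and the absolute value of its Jacobian determinant at (t,u) equals t^{n−1} · 2^{−n(n−1)/2} · ∏_{i=1}^{n−1}(1+u_i)^{i−1}. -/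

import Mathlib

open MeasureTheory Finset

noncomputable section

def psum {n : ℕ} (x : Fin n → ℝ) (m : ℕ) : ℝ :=
  ∑ j : Fin n, if (j : ℕ) < m then x j else 0

def simplexD (n : ℕ) : Set (Fin n → ℝ) := {x | (∀ i, 0 < x i) ∧ psum x n < 1}

def phiN (n : ℕ) (hn : 2 ≤ n) (t : ℝ) (u : Fin (n - 1) → ℝ) : Fin n → ℝ := fun j =>
  if h0 : (j : ℕ) = 0 then t * (∏ i, (1 + u i)) / 2 ^ (n - 1)
  else if h1 : (j : ℕ) = n - 1 then t * (1 - u ⟨n - 2, by omega⟩) / 2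
  else t * ((1 - u ⟨(j : ℕ) - 1, by have := j.isLt; omega⟩) / 2) *
    ∏ i : Fin (n - 1), (if (j : ℕ) ≤ (i : ℕ) then (1 + u i) / 2 else 1)

def jacPhiN (n : ℕ) (hn : 2 ≤ n) (t : ℝ) (u : Fin (n - 1) → ℝ) :
    Matrix (Fin n) (Fin n) ℝ :=
  fun i j =>
    if h : (j : ℕ) = 0 then deriv (fun s => phiN n hn s u i) t
    else fderiv ℝ (fun w => phiN n hn t w i) u
      (Pi.single ⟨(j : ℕ) - 1, by have := j.isLt; omega⟩ 1)

/-!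
Write `P_m(u) = ∏_{i ≥ m} (1 + uᵢ)/2` (indices from `0`). The partial sums of `x = φ_n(t, u)`
telescope: `x₀ + ⋯ + x_m = t P_m(u)`. So `t` is the total sum of `x` and, since
`x_{k+1} = (x₀ + ⋯ + x_{k+1}) (1 - u_k)/2`, each `u_k` is a ratio of partial sums of `x`; this
explicit inverse maps the simplex back into the box.

For the Jacobian, replacing each row by the sum of the rows up to it does not change the
determinant and turns row `m` into the gradient of `t P_m(u)`. That gradient has `t`-component
`P_m(u)`, and its `u_l`-component vanishes for `l < m` and equals `t P_{m+1}(u)/2` for `l = m`.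
Moving the `t`-column to the end therefore gives an upper triangular matrix with diagonal
`t P_1/2, …, t P_{n-1}/2, 1`, and `∏_{m ≥ 1} P_m = ∏_l ((1 + u_l)/2)^l`.
-/
section psum

variable {n : ℕ} (x : Fin n → ℝ)

@[simp] lemma psum_zero : psum x 0 = 0 := by simp [psum]

lemma psum_succ {m : ℕ} (hm : m < n) : psum x (m + 1) = psum x m + x ⟨m, hm⟩ := by
  have hsplit : ∀ j : Fin n, (if (j : ℕ) < m + 1 then x j else 0)
      = (if (j : ℕ) < m then x j else 0) + if j = ⟨m, hm⟩ then x j else 0 := by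
    intro j
    rcases lt_trichotomy (j : ℕ) m with h | h | h
    · simp [h, Nat.lt_succ_of_lt h, Fin.ext_iff, h.ne]
    · simp [h, Fin.ext_iff]
    · simp [h.ne', Fin.ext_iff, show ¬ (j : ℕ) < m + 1 by omega, h.not_gt]
  simp only [psum, hsplit, sum_add_distrib, sum_ite_eq', mem_univ, if_true]

lemma psum_pos {x : Fin n → ℝ} (hx : ∀ i, 0 < x i) {m : ℕ} (hm : 0 < m) (hn : 0 < n) :
    0 < psum x m :=
  sum_pos' (fun i _ => by split_ifs <;> simp [(hx i).le])
    ⟨⟨0, hn⟩, mem_univ _, by simp [hm, hx]⟩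

lemma eq_of_psum_succ_eq {x y : Fin n → ℝ}
    (h : ∀ m < n, psum x (m + 1) = psum y (m + 1)) : x = y := by
  refine funext fun ⟨m, hm⟩ => ?_
  have hx := psum_succ x hm
  have hy := psum_succ y hm
  cases m with
  | zero => simp_all
  | succ k => linarith [h k (by omega), h (k + 1) hm]

end psum

def tailProd {k : ℕ} (u : Fin k → ℝ) (m : ℕ) : ℝ :=
  ∏ i ∈ univ.filter (fun i : Fin k => m ≤ (i : ℕ)), (1 + u i) / 2

section tailProd

variable {k : ℕ} (u : Fin k → ℝ)

lemma tailProd_of_le {m : ℕ} (hm : k ≤ m) : tailProd u m = 1 :=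
  prod_eq_one fun i hi => absurd (mem_filter.1 hi).2 (by omega)

lemma tailProd_eq_mul {m : ℕ} (hm : m < k) :
    tailProd u m = (1 + u ⟨m, hm⟩) / 2 * tailProd u (m + 1) := by
  have hfilter : univ.filter (fun i : Fin k => m ≤ (i : ℕ))
      = insert ⟨m, hm⟩ (univ.filter fun i : Fin k => m + 1 ≤ (i : ℕ)) := by
    ext i
    simp only [mem_filter, mem_univ, true_and, mem_insert, Fin.ext_iff]
    omega
  rw [tailProd, hfilter, prod_insert (by simp)]
  rfl

lemma tailProd_pos {u : Fin k → ℝ} (hu : ∀ i, -1 < u i) (m : ℕ) : 0 < tailProd u m :=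
  prod_pos fun i _ => by linarith [hu i]

lemma tailProd_zero : tailProd u 0 = (∏ i, (1 + u i)) / 2 ^ k := by
  simp [tailProd, prod_div_distrib]

end tailProd

section phiN

variable {n : ℕ} (hn : 2 ≤ n) (t : ℝ) (u : Fin (n - 1) → ℝ)

lemma phiN_of_eq_zero {j : Fin n} (hj : (j : ℕ) = 0) : phiN n hn t u j = t * tailProd u 0 := by
  rw [phiN, dif_pos hj, tailProd_zero, mul_div_assoc]

lemma phiN_of_ne_zero {j : Fin n} (hj : (j : ℕ) ≠ 0) :
    phiN n hn t u j = t * ((1 - u ⟨j - 1, by omega⟩) / 2) * tailProd u j := by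
  rw [phiN, dif_neg hj]
  split_ifs with hlast
  · rw [tailProd_of_le u (by omega)]
    simp only [hlast, show n - 1 - 1 = n - 2 by omega]
    ring
  · rw [tailProd, prod_filter]

lemma phiN_eq_mul_phiN_one (j : Fin n) : phiN n hn t u j = t * phiN n hn 1 u j := by
  unfold phiN
  split_ifs <;> ring

lemma psum_phiN_succ {m : ℕ} (hm : m < n) : psum (phiN n hn t u) (m + 1) = t * tailProd u m := by
  induction m with
  | zero => simp [psum_succ _ hm, phiN_of_eq_zero]
  | succ m ih =>
    rw [psum_succ _ hm, ih (by omega), phiN_of_ne_zero hn t u (j := ⟨m + 1, hm⟩) (by simp),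
      tailProd_eq_mul u (by omega : m < n - 1)]
    simp only [add_tsub_cancel_right]
    ring

lemma psum_phiN : psum (phiN n hn t u) n = t := by
  obtain ⟨m, rfl⟩ : ∃ m, n = m + 1 := ⟨n - 1, by omega⟩
  rw [psum_phiN_succ hn t u (Nat.lt_succ_self m), tailProd_of_le u (by omega), mul_one]

lemma phiN_pos {t : ℝ} (ht : 0 < t) {u : Fin (n - 1) → ℝ}
    (hu : ∀ i, u i ∈ Set.Ioo (-1 : ℝ) 1) (j : Fin n) : 0 < phiN n hn t u j := by
  have hP := tailProd_pos fun i => (hu i).1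
  by_cases hj : (j : ℕ) = 0
  · rw [phiN_of_eq_zero hn t u hj]
    exact mul_pos ht (hP 0)
  · rw [phiN_of_ne_zero hn t u hj]
    have := (hu ⟨j - 1, by omega⟩).2
    exact mul_pos (mul_pos ht (by linarith)) (hP j)

end phiN

def phiNInv {n : ℕ} (hn : 2 ≤ n) (x : Fin n → ℝ) : ℝ × (Fin (n - 1) → ℝ) :=
  (psum x n, fun k => 1 - 2 * x ⟨k + 1, by omega⟩ / psum x (k + 2))

section phiNInv

variable {n : ℕ} (hn : 2 ≤ n) {x : Fin n → ℝ}

lemma phiNInv_mem (hx : x ∈ simplexD n) :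
    phiNInv hn x ∈
      Set.Ioo 0 1 ×ˢ Set.pi Set.univ fun _ : Fin (n - 1) => Set.Ioo (-1 : ℝ) 1 := by
  refine ⟨⟨psum_pos hx.1 (by omega) (by omega), hx.2⟩, fun k _ => ?_⟩
  have hk : (k : ℕ) + 1 < n := by omega
  have hS := psum_pos hx.1 (Nat.succ_pos k) (by omega)
  have hxk := hx.1 ⟨k + 1, hk⟩
  have hratio : 2 * x ⟨k + 1, hk⟩ / psum x (k + 2) ∈ Set.Ioo 0 2 := by
    rw [psum_succ x hk]
    constructor
    · positivity
    · rw [div_lt_iff₀ (by positivity)]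
      linarith
  simp only [phiNInv]
  exact ⟨by linarith [hratio.2], by linarith [hratio.1]⟩

lemma psum_mul_tailProd_phiNInv (hx : ∀ i, 0 < x i) {m : ℕ} (hm : m < n) :
    psum x n * tailProd (phiNInv hn x).2 m = psum x (m + 1) := by
  replace hm : m ≤ n - 1 := by omega
  induction hm using Nat.decreasingInduction with
  | self => rw [tailProd_of_le _ le_rfl, mul_one, Nat.sub_add_cancel (by omega)]
  | of_succ m hm ih =>
    have hS := psum_pos hx (Nat.succ_pos (m + 1)) (by omega)
    rw [tailProd_eq_mul _ hm, mul_left_comm, ih]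
    simp only [phiNInv]
    rw [psum_succ x (m := m + 1) (by omega)] at hS ⊢
    field_simp
    ring

lemma phiN_phiNInv (hx : ∀ i, 0 < x i) : phiN n hn (phiNInv hn x).1 (phiNInv hn x).2 = x :=
  eq_of_psum_succ_eq fun m hm => by
    rw [psum_phiN_succ hn _ _ hm, ← psum_mul_tailProd_phiNInv hn hx hm]
    rfl

lemma phiNInv_phiN {t : ℝ} (ht : 0 < t) {u : Fin (n - 1) → ℝ} (hu : ∀ i, -1 < u i) :
    phiNInv hn (phiN n hn t u) = (t, u) := by
  refine Prod.ext (psum_phiN hn t u) (funext fun k => ?_)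
  have hk : (k : ℕ) + 1 < n := by omega
  have hP := tailProd_pos hu ((k : ℕ) + 1)
  simp only [phiNInv, psum_phiN_succ hn t u hk,
    phiN_of_ne_zero hn t u (j := ⟨k + 1, hk⟩) (by simp)]
  simp only [add_tsub_cancel_right, Fin.eta]
  field_simp
  ring

end phiNInv

lemma bijOn_phiN {n : ℕ} (hn : 2 ≤ n) :
    Set.BijOn (fun q : ℝ × (Fin (n - 1) → ℝ) => phiN n hn q.1 q.2)
      (Set.Ioo 0 1 ×ˢ Set.pi Set.univ fun _ : Fin (n - 1) => Set.Ioo (-1 : ℝ) 1)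
      (simplexD n) := by
  refine Set.InvOn.bijOn (f' := phiNInv hn) ⟨fun q hq => ?_, fun x hx => phiN_phiNInv hn hx.1⟩
    (fun q hq => ⟨phiN_pos hn hq.1.1 (fun i => hq.2 i trivial), ?_⟩)
    (fun x hx => phiNInv_mem hn hx)
  · exact phiNInv_phiN hn hq.1.1 fun i => (hq.2 i trivial).1
  · rw [psum_phiN]
    exact hq.1.2

section fderiv

variable {k : ℕ}

lemma hasFDerivAt_tailProd (u : Fin k → ℝ) (m : ℕ) :
    HasFDerivAt (fun w => tailProd w m)
      (∑ i ∈ univ.filter (fun i : Fin k => m ≤ (i : ℕ)),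
        (∏ j ∈ (univ.filter fun i : Fin k => m ≤ (i : ℕ)).erase i, (1 + u j) / 2) •
          (2⁻¹ : ℝ) • ContinuousLinearMap.proj (R := ℝ) (φ := fun _ : Fin k => ℝ) i)
      u :=
  HasFDerivAt.finsetProd fun i _ => by
    simpa [div_eq_mul_inv] using ((hasFDerivAt_apply i u).const_add 1).mul_const (2⁻¹ : ℝ)

@[fun_prop]
lemma differentiableAt_tailProd (u : Fin k → ℝ) (m : ℕ) :
    DifferentiableAt ℝ (fun w => tailProd w m) u :=
  (hasFDerivAt_tailProd u m).differentiableAt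

lemma fderiv_tailProd_apply_single (u : Fin k → ℝ) (m : ℕ) (l : Fin k) :
    fderiv ℝ (fun w => tailProd w m) u (Pi.single l 1)
      = if m ≤ (l : ℕ) then
          (∏ j ∈ (univ.filter fun i : Fin k => m ≤ (i : ℕ)).erase l, (1 + u j) / 2) / 2
        else 0 := by
  rw [(hasFDerivAt_tailProd u m).fderiv]
  simp [Pi.single_apply, div_eq_mul_inv]

lemma fderiv_tailProd_apply_single_of_lt (u : Fin k → ℝ) {m : ℕ} {l : Fin k}
    (hl : (l : ℕ) < m) :
    fderiv ℝ (fun w => tailProd w m) u (Pi.single l 1) = 0 := by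
  rw [fderiv_tailProd_apply_single, if_neg (by omega)]

lemma fderiv_tailProd_apply_single_self (u : Fin k → ℝ) {m : ℕ} (hm : m < k) :
    fderiv ℝ (fun w => tailProd w m) u (Pi.single ⟨m, hm⟩ 1) = tailProd u (m + 1) / 2 := by
  rw [fderiv_tailProd_apply_single, if_pos le_rfl, tailProd]
  congr 2
  ext i
  simp only [mem_erase, mem_filter, mem_univ, true_and, ne_eq, Fin.ext_iff]
  omega

lemma fderiv_psum_apply {E : Type*} [NormedAddCommGroup E] [NormedSpace ℝ E] {n : ℕ}
    {f : E → Fin n → ℝ} {u : E} (hf : ∀ k, DifferentiableAt ℝ (fun w => f w k) u)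
    (m : ℕ) (v : E) :
    fderiv ℝ (fun w => psum (f w) m) u v = psum (fun k => fderiv ℝ (fun w => f w k) u v) m := by
  unfold psum
  rw [fderiv_fun_sum fun k _ => by split_ifs <;> simp [hf k], _root_.sum_apply]
  refine sum_congr rfl fun k _ => ?_
  split_ifs <;> simp

end fderiv

def lowerOnes (n : ℕ) : Matrix (Fin n) (Fin n) ℝ :=
  Matrix.of fun i k => if k ≤ i then 1 else 0

lemma det_lowerOnes (n : ℕ) : (lowerOnes n).det = 1 := by
  rw [Matrix.det_of_isLowerTriangular (lowerOnes n) fun i k hik => if_neg (not_le.2 hik)]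
  simp [lowerOnes]

lemma lowerOnes_mul_apply {n : ℕ} (A : Matrix (Fin n) (Fin n) ℝ) (i j : Fin n) :
    (lowerOnes n * A) i j = psum (fun k => A k j) (i + 1) := by
  simp only [Matrix.mul_apply, lowerOnes, Matrix.of_apply, psum, ite_mul, one_mul, zero_mul,
    Nat.lt_succ_iff, Fin.le_def]

section jacobian

variable {n : ℕ} (hn : 2 ≤ n) (t : ℝ) (u : Fin (n - 1) → ℝ)

lemma differentiableAt_phiN (j : Fin n) : DifferentiableAt ℝ (fun w => phiN n hn t w j) u := by
  by_cases hj : (j : ℕ) = 0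
  · simp only [phiN_of_eq_zero hn _ _ hj]
    fun_prop
  · simp only [phiN_of_ne_zero hn _ _ hj]
    fun_prop

lemma deriv_phiN (j : Fin n) : deriv (fun s => phiN n hn s u j) t = phiN n hn 1 u j := by
  simp [funext fun s => phiN_eq_mul_phiN_one hn s u j]

lemma lowerOnes_mul_jacPhiN_of_eq_zero (i : Fin n) {j : Fin n} (hj : (j : ℕ) = 0) :
    (lowerOnes n * jacPhiN n hn t u) i j = tailProd u i := by
  simp only [lowerOnes_mul_apply, jacPhiN, dif_pos hj, deriv_phiN]
  rw [psum_phiN_succ hn 1 u i.isLt, one_mul]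

lemma lowerOnes_mul_jacPhiN_of_ne_zero (i : Fin n) {j : Fin n} (hj : (j : ℕ) ≠ 0) :
    (lowerOnes n * jacPhiN n hn t u) i j
      = t * fderiv ℝ (fun w => tailProd w i) u (Pi.single ⟨j - 1, by omega⟩ 1) := by
  simp only [lowerOnes_mul_apply, jacPhiN, dif_neg hj]
  rw [← fderiv_psum_apply (differentiableAt_phiN hn t u)]
  simp only [psum_phiN_succ hn t _ i.isLt]
  rw [fderiv_const_mul (differentiableAt_tailProd u i), smul_apply, smul_eq_mul]

lemma abs_det_jacPhiN :
    |(jacPhiN n hn t u).det| = |∏ i : Fin (n - 1), t * (tailProd u (i + 1) / 2)| := by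
  obtain ⟨m, rfl⟩ : ∃ m, n = m + 1 := ⟨n - 1, by omega⟩
  set R := (lowerOnes (m + 1) * jacPhiN (m + 1) hn t u).submatrix id (finRotate (m + 1))
  have hR_apply {i k : Fin (m + 1)} (hk : k ≠ Fin.last m) :
      R i k = t * fderiv ℝ (fun w => tailProd w i) u
        (Pi.single ⟨k, by have := Fin.val_lt_last hk; omega⟩ 1) := by
    have hcoe := coe_finRotate_of_ne_last hk
    simp only [R, Matrix.submatrix_apply, id]
    rw [lowerOnes_mul_jacPhiN_of_ne_zero hn t u i (by omega)]
    simp only [hcoe, add_tsub_cancel_right]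
  have hR : R.IsUpperTriangular := fun i k hki => by
    have hk : k ≠ Fin.last m := ne_of_lt (lt_of_lt_of_le hki (Fin.le_last i))
    exact (hR_apply hk).trans (mul_eq_zero_of_right t (fderiv_tailProd_apply_single_of_lt u hki))
  have hR_last : R (Fin.last m) (Fin.last m) = 1 := by
    simp only [R, Matrix.submatrix_apply, id, finRotate_last]
    rw [lowerOnes_mul_jacPhiN_of_eq_zero hn t u _ rfl, tailProd_of_le u (by simp)]
  have hR_diag (i : Fin m) :
      R i.castSucc i.castSucc = t * (tailProd u (i + 1) / 2) := by
    rw [hR_apply (Fin.castSucc_ne_last i), ← fderiv_tailProd_apply_single_self u i.isLt]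
    rfl
  have hdet : R.det = Equiv.Perm.sign (finRotate (m + 1)) * (jacPhiN (m + 1) hn t u).det := by
    rw [Matrix.det_permute', Matrix.det_mul, det_lowerOnes, one_mul]
  rw [Matrix.det_of_isUpperTriangular hR, Fin.prod_univ_castSucc, hR_last, mul_one] at hdet
  simp only [hR_diag] at hdet
  simp [hdet, abs_mul]

end jacobian

lemma prod_tailProd_succ {k : ℕ} (u : Fin k → ℝ) :
    ∏ i : Fin k, tailProd u (i + 1) = ∏ l : Fin k, ((1 + u l) / 2) ^ (l : ℕ) := by
  simp only [tailProd, prod_filter]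
  rw [prod_comm]
  refine prod_congr rfl fun l _ => ?_
  have hfilter : univ.filter (fun i : Fin k => (i : ℕ) + 1 ≤ l) = Iio l := by
    ext i
    simp only [mem_filter, mem_univ, true_and, mem_Iio, Nat.succ_le_iff, Fin.lt_def]
  rw [← prod_filter, prod_const, hfilter, Fin.card_Iio]

lemma prod_mul_tailProd_succ_div_two {k : ℕ} (t : ℝ) (u : Fin k → ℝ) :
    ∏ i : Fin k, t * (tailProd u (i + 1) / 2)
      = t ^ k / 2 ^ ((k + 1) * k / 2) * ∏ i : Fin k, (1 + u i) ^ (i : ℕ) := by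
  have hexp : (k + 1) * k / 2 = k + ∑ i : Fin k, (i : ℕ) := by
    have hgauss := sum_range_id (k + 1)
    rw [sum_range_succ, Nat.add_sub_cancel] at hgauss
    rw [Fin.sum_univ_eq_sum_range (fun i => i) k, ← hgauss, add_comm]
  simp only [mul_div_assoc', prod_div_distrib, prod_mul_distrib, prod_const, card_univ,
    Fintype.card_fin, prod_tailProd_succ, div_pow, prod_pow_eq_pow_sum, hexp, pow_add]
  ring

/-- `φ_n` is a bijection from `(0,1) × (-1,1)^{n-1}` onto the simplex `D_n`, with
`|Jac φ_n(t,u)| = t^{n-1}·2^{-n(n-1)/2}·∏ (1+uᵢ)^{i-1}`. -/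
theorem stmt10 (n : ℕ) (hn : 2 ≤ n) :
    Set.BijOn (fun q : ℝ × (Fin (n - 1) → ℝ) => phiN n hn q.1 q.2)
      (Set.Ioo 0 1 ×ˢ Set.pi Set.univ fun _ : Fin (n - 1) => Set.Ioo (-1 : ℝ) 1)
      (simplexD n) ∧
    ∀ t ∈ Set.Ioo (0 : ℝ) 1,
      ∀ u ∈ Set.pi Set.univ fun _ : Fin (n - 1) => Set.Ioo (-1 : ℝ) 1,
        |(jacPhiN n hn t u).det|
          = t ^ (n - 1) / 2 ^ (n * (n - 1) / 2) * ∏ i : Fin (n - 1), (1 + u i) ^ (i : ℕ) := by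
  refine ⟨bijOn_phiN hn, fun t ht u hu => ?_⟩
  have hP := tailProd_pos fun i => (hu i trivial).1
  have hpos : 0 < ∏ i : Fin (n - 1), t * (tailProd u (i + 1) / 2) :=
    prod_pos fun i _ => mul_pos ht.1 (half_pos (hP _))
  rw [abs_det_jacPhiN, abs_of_pos hpos, prod_mul_tailProd_succ_div_two,
    Nat.sub_add_cancel (by omega : 1 ≤ n)]
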